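/- Let T be a tree of order n ≥ 3 and L a successful layout on T in which a stem s (a vertex adjacent to a leaf) is occupied. Then there exists a successful layout L' on T with the same number of searchers in which s is unoccupied. -/
import Mathlib


open Finset in
/-- One stage of the deduction game.  The state is a pair `(P, F)` where `P` is the set of
protected vertices and `F` is the set of vertices whose initial searchers have already fired
(moved).  A vertex `v` is fireable if it is occupied, has not yet fired, and the number of
searchers on it (in the initial layout `L`) is at least its number of unprotected neighbours.
All fireable vertices fire simultaneously: one searcher moves to each unprotected neighbour,
which thereby becomes protected. -/
def dedStep {V : Type*} [Fintype V] [DecidableEq V] (G : SimpleGraph V) [DecidableRel G.Adj]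
    (L : V → ℕ) (s : Finset V × Finset V) : Finset V × Finset V :=
  let fire : Finset V := univ.filter (fun v =>
    0 < L v ∧ v ∉ s.2 ∧ (univ.filter (fun u => G.Adj v u ∧ u ∉ s.1)).card ≤ L v)
  (s.1 ∪ fire.biUnion (fun v => univ.filter (fun u => G.Adj v u ∧ u ∉ s.1)), s.2 ∪ fire)

open Finset in
/-- A layout `L` (assigning a number of searchers to each vertex) is successful if, starting
from the initially occupied vertices being protected and no vertex having fired, iterating the
deduction stages eventually protects every vertex. -/
def DedSuccessful {V : Type*} [Fintype V] [DecidableEq V] (G : SimpleGraph V)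
    [DecidableRel G.Adj] (L : V → ℕ) : Prop :=
  ∃ k : ℕ, ((dedStep G L)^[k] (univ.filter (fun v => 0 < L v), ∅)).1 = univ

/-- The deduction number of `G`: the minimum number of searchers in a successful layout. -/
noncomputable def deductionNumber {V : Type*} [Fintype V] (G : SimpleGraph V) : ℕ :=
  letI := Classical.decEq V
  letI := Classical.decRel G.Adj
  sInf {n | ∃ L : V → ℕ, (∑ v, L v) = n ∧ DedSuccessful G L}


open Finset

section Aux
variable {V : Type*} [Fintype V] [DecidableEq V] (G : SimpleGraph V) [DecidableRel G.Adj]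

def dedFire (M : V → ℕ) (st : Finset V × Finset V) : Finset V :=
  univ.filter (fun v => 0 < M v ∧ v ∉ st.2 ∧ (univ.filter (fun u => G.Adj v u ∧ u ∉ st.1)).card ≤ M v)

lemma mem_dedFire {M : V → ℕ} {st : Finset V × Finset V} {v : V} :
    v ∈ dedFire G M st ↔
      0 < M v ∧ v ∉ st.2 ∧ (univ.filter (fun u => G.Adj v u ∧ u ∉ st.1)).card ≤ M v := by
  simp [dedFire]

lemma dedStep_eq (M : V → ℕ) (st : Finset V × Finset V) :
    dedStep G M st = (st.1 ∪ (dedFire G M st).biUnion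
      (fun v => univ.filter (fun u => G.Adj v u ∧ u ∉ st.1)), st.2 ∪ dedFire G M st) := rfl

def dedState (M : V → ℕ) (k : ℕ) : Finset V × Finset V :=
  (dedStep G M)^[k] (univ.filter (fun v => 0 < M v), ∅)

lemma dedState_zero (M : V → ℕ) : dedState G M 0 = (univ.filter (fun v => 0 < M v), ∅) := rfl

lemma dedState_succ (M : V → ℕ) (k : ℕ) :
    dedState G M (k + 1) = dedStep G M (dedState G M k) :=
  Function.iterate_succ_apply' _ _ _

lemma dedState_P_succ (M : V → ℕ) (k : ℕ) :
    (dedState G M k).1 ⊆ (dedState G M (k + 1)).1 := by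
  rw [dedState_succ, dedStep_eq]; exact subset_union_left

lemma dedState_F_succ (M : V → ℕ) (k : ℕ) :
    (dedState G M k).2 ⊆ (dedState G M (k + 1)).2 := by
  rw [dedState_succ, dedStep_eq]; exact subset_union_left

lemma dedState_P_mono (M : V → ℕ) {j k : ℕ} (h : j ≤ k) :
    (dedState G M j).1 ⊆ (dedState G M k).1 := by
  induction k with
  | zero => simp [Nat.le_zero.mp h]
  | succ n ih =>
      rcases Nat.lt_or_ge j (n+1) with h' | h'
      · exact (ih (Nat.lt_succ_iff.mp h')).trans (dedState_P_succ G M n)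
      · have : j = n + 1 := le_antisymm h h'
        simp [this]

lemma dedState_F_mono (M : V → ℕ) {j k : ℕ} (h : j ≤ k) :
    (dedState G M j).2 ⊆ (dedState G M k).2 := by
  induction k with
  | zero => simp [Nat.le_zero.mp h]
  | succ n ih =>
      rcases Nat.lt_or_ge j (n+1) with h' | h'
      · exact (ih (Nat.lt_succ_iff.mp h')).trans (dedState_F_succ G M n)
      · have : j = n + 1 := le_antisymm h h'
        simp [this]

lemma dedState_fired_adj (M : V → ℕ) (k : ℕ) :
    ∀ v ∈ (dedState G M k).2, ∀ u, G.Adj v u → u ∈ (dedState G M k).1 := by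
  induction k with
  | zero => simp [dedState_zero]
  | succ n ih =>
      intro v hv u hu
      rw [dedState_succ, dedStep_eq] at hv ⊢
      simp only [mem_union] at hv ⊢
      rcases hv with hv | hv
      · exact Or.inl (ih v hv u hu)
      · by_cases hP : u ∈ (dedState G M n).1
        · exact Or.inl hP
        · exact Or.inr (mem_biUnion.mpr ⟨v, hv, by simp [hu, hP]⟩)

lemma dedState_protected_src (M : V → ℕ) (k : ℕ) :
    ∀ u ∈ (dedState G M k).1, 0 < M u ∨ ∃ v ∈ (dedState G M k).2, G.Adj v u := by
  induction k with
  | zero => intro u hu; rw [dedState_zero] at hu; simp only [mem_filter] at hu; exact Or.inl hu.2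
  | succ n ih =>
      intro u hu
      rw [dedState_succ, dedStep_eq] at hu
      simp only [mem_union] at hu
      rcases hu with hu | hu
      · rcases ih u hu with h | ⟨v, hv, hadj⟩
        · exact Or.inl h
        · exact Or.inr ⟨v, dedState_F_succ G M n hv, hadj⟩
      · obtain ⟨v, hv, hu⟩ := mem_biUnion.mp hu
        simp only [mem_filter, mem_univ, true_and] at hu
        exact Or.inr ⟨v, by
          rw [dedState_succ, dedStep_eq]; exact mem_union_right _ hv, hu.1⟩

end Aux

theorem stem_unoccupied_layout {V : Type*} [Fintype V] [DecidableEq V]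
    (G : SimpleGraph V) [DecidableRel G.Adj] (hT : G.IsTree) (h3 : 3 ≤ Fintype.card V)
    (L : V → ℕ) (hL : DedSuccessful G L) (s : V)
    (hstem : ∃ ℓ, G.Adj s ℓ ∧ G.degree ℓ = 1) (hocc : 0 < L s) :
    ∃ L' : V → ℕ, DedSuccessful G L' ∧ (∑ v, L' v) = (∑ v, L v) ∧ L' s = 0 := by
  classical
  obtain ⟨ℓ, hadj, hdeg⟩ := hstem
  have hsl : s ≠ ℓ := G.ne_of_adj hadj
  obtain ⟨K, hK⟩ := hL
  have hK' : (dedState G L K).1 = univ := hK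
  -- the leaf's unique neighbour is s
  have huniq : ∀ v, G.Adj v ℓ → v = s := by
    intro v hv
    have h1 : (G.neighborFinset ℓ).card = 1 := by
      rw [G.card_neighborFinset_eq_degree]; exact hdeg
    obtain ⟨a, ha⟩ := Finset.card_eq_one.mp h1
    have hs' : s ∈ G.neighborFinset ℓ := by
      simp [SimpleGraph.mem_neighborFinset, hadj.symm]
    have hv' : v ∈ G.neighborFinset ℓ := by
      simp [SimpleGraph.mem_neighborFinset, hv.symm]
    rw [ha, mem_singleton] at hs' hv'
    rw [hv', hs']
  -- s fires at most once in the run of L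
  have hfire_unique : ∀ j t, s ∈ dedFire G L (dedState G L j) →
      s ∈ dedFire G L (dedState G L t) → j = t := by
    have key : ∀ a b, a < b → s ∈ dedFire G L (dedState G L a) →
        s ∈ dedFire G L (dedState G L b) → False := by
      intro a b hab ha hb
      have h1 : s ∈ (dedState G L (a+1)).2 := by
        rw [dedState_succ, dedStep_eq]; exact mem_union_right _ ha
      have h2 : s ∈ (dedState G L b).2 := dedState_F_mono G L hab h1
      exact (mem_dedFire G |>.mp hb).2.1 h2
    intro j t hj ht
    rcases lt_trichotomy j t with h | h | h
    · exact absurd (key j t h hj ht) not_false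
    · exact h
    · exact absurd (key t j h ht hj) not_false
  -- the set U of vertices protected by s when it fires (if it fires)
  obtain ⟨U, hUcard, hUadj, hUfire, hUℓ⟩ :
      ∃ U : Finset V, U.card ≤ L s ∧ (∀ u ∈ U, G.Adj s u) ∧
        (∀ k, s ∈ dedFire G L (dedState G L k) →
          univ.filter (fun u => G.Adj s u ∧ u ∉ (dedState G L k).1) = U) ∧
        (ℓ ∉ U → L s ≤ U.card → 0 < L ℓ) := by
    by_cases hex : ∃ k, s ∈ dedFire G L (dedState G L k)
    · obtain ⟨t, ht⟩ := hex
      refine ⟨univ.filter (fun u => G.Adj s u ∧ u ∉ (dedState G L t).1), ?_, ?_, ?_, ?_⟩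
      · exact (mem_dedFire G |>.mp ht).2.2
      · intro u hu; exact (mem_filter.mp hu).2.1
      · intro k hk; rw [hfire_unique k t hk ht]
      · intro hl _
        have hlP : ℓ ∈ (dedState G L t).1 := by
          by_contra h
          exact hl (mem_filter.mpr ⟨mem_univ _, hadj, h⟩)
        rcases dedState_protected_src G L t ℓ hlP with h | ⟨v, hv, hvadj⟩
        · exact h
        · exact absurd ((huniq v hvadj) ▸ hv) (mem_dedFire G |>.mp ht).2.1
    · refine ⟨∅, by simp, by simp, fun k hk => absurd ⟨k, hk⟩ hex, fun _ h => ?_⟩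
      simp only [card_empty, Nat.le_zero] at h
      omega
  have hUs : s ∉ U := fun h => G.irrefl (hUadj s h)
  -- the new layout
  set L' : V → ℕ := fun v =>
    if v = s then 0 else L v + (if v ∈ U then 1 else 0) + (if v = ℓ then L s - U.card else 0)
    with hL'def
  have hL's : L' s = 0 := if_pos rfl
  have hL'le : ∀ v, v ≠ s → L v ≤ L' v := by
    intro v hv
    simp only [hL'def, if_neg hv]
    exact (Nat.le_add_right _ _).trans (Nat.le_add_right _ _)
  have hL'lpos : 0 < L' ℓ := by
    have hval : L' ℓ = L ℓ + (if ℓ ∈ U then 1 else 0) + (L s - U.card) := by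
      simp [hL'def, Ne.symm hsl]
    by_cases h1 : ℓ ∈ U
    · rw [if_pos h1] at hval; omega
    · rw [if_neg h1] at hval
      rcases Nat.lt_or_ge U.card (L s) with h2 | h2
      · omega
      · have := hUℓ h1 h2; omega
  have hUpos : ∀ u ∈ U, 0 < L' u := by
    intro u hu
    have hus : u ≠ s := fun h => hUs (h ▸ hu)
    simp only [hL'def, if_neg hus, if_pos hu]
    omega
  -- sum equality
  have hsum : (∑ v, L' v) = ∑ v, L v := by
    have h1 : ∀ v : V, L' v = (if v = s then 0 else L v) +
        (if v ∈ U then 1 else 0) + (if v = ℓ then L s - U.card else 0) := by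
      intro v
      by_cases hv : v = s
      · subst hv; simp [hL'def, hUs, hsl]
      · simp [hL'def, hv]
    rw [Finset.sum_congr rfl fun v _ => h1 v, Finset.sum_add_distrib, Finset.sum_add_distrib]
    have hA : ∑ v, (if v = s then (0:ℕ) else L v) + ∑ v, (if v = s then L v else 0)
        = ∑ v, L v := by
      rw [← Finset.sum_add_distrib]
      exact Finset.sum_congr rfl fun v _ => by by_cases hv : v = s <;> simp [hv]
    have hA2 : ∑ v, (if v = s then L v else 0) = L s := by
      rw [Finset.sum_ite_eq' univ s L]; simp
    have hB : ∑ v, (if v ∈ U then (1:ℕ) else 0) = U.card := by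
      rw [Finset.sum_ite_mem, Finset.univ_inter, Finset.sum_const, smul_eq_mul, mul_one]
    have hC : ∑ v, (if v = ℓ then L s - U.card else 0) = L s - U.card := by
      rw [Finset.sum_ite_eq' univ ℓ (fun _ => L s - U.card)]; simp
    omega
  -- base facts for the L' run
  have hS'0 : ∀ v, v ≠ s → 0 < L v → v ∈ (dedState G L' 0).1 := by
    intro v hv hp
    rw [dedState_zero]
    exact mem_filter.mpr ⟨mem_univ _, lt_of_lt_of_le hp (hL'le v hv)⟩
  have hU0 : ∀ u ∈ U, u ∈ (dedState G L' 0).1 := by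
    intro u hu
    rw [dedState_zero]
    exact mem_filter.mpr ⟨mem_univ _, hUpos u hu⟩
  have hs1 : s ∈ (dedState G L' 1).1 := by
    rw [show (1:ℕ) = 0 + 1 from rfl, dedState_succ, dedStep_eq]
    apply mem_union_right
    apply mem_biUnion.mpr
    refine ⟨ℓ, ?_, ?_⟩
    · rw [mem_dedFire]
      refine ⟨hL'lpos, by rw [dedState_zero]; exact notMem_empty _, ?_⟩
      calc (univ.filter (fun u => G.Adj ℓ u ∧ u ∉ (dedState G L' 0).1)).card
          ≤ (G.neighborFinset ℓ).card := by
            apply card_le_card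
            intro u hu
            simp only [mem_filter] at hu
            exact (SimpleGraph.mem_neighborFinset G ℓ u).mpr hu.2.1
        _ = 1 := by rw [G.card_neighborFinset_eq_degree]; exact hdeg
        _ ≤ L' ℓ := hL'lpos
    · rw [dedState_zero]
      simp only [mem_filter, mem_univ, true_and]
      exact ⟨hadj.symm, by simp [hL's]⟩
  -- the main simulation
  have main : ∀ k, (dedState G L k).1 ⊆ (dedState G L' (k+1)).1 ∧
      ∀ v ∈ (dedState G L k).2, v ≠ s → v ∈ (dedState G L' (k+1)).2 := by
    intro k
    induction k with
    | zero =>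
        constructor
        · intro v hv
          rw [dedState_zero] at hv
          simp only [mem_filter] at hv
          by_cases hv' : v = s
          · subst hv'; exact hs1
          · exact dedState_P_succ G L' 0 (hS'0 v hv' hv.2)
        · intro v hv
          rw [dedState_zero] at hv
          exact absurd hv (notMem_empty _)
    | succ n ih =>
        obtain ⟨ihP, ihF⟩ := ih
        have hfire' : ∀ v ∈ dedFire G L (dedState G L n), v ≠ s →
            v ∈ (dedState G L' (n+1+1)).2 := by
          intro v hv hvs
          rw [dedState_succ, dedStep_eq]
          by_cases hvF : v ∈ (dedState G L' (n+1)).2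
          · exact mem_union_left _ hvF
          · apply mem_union_right
            rw [mem_dedFire] at hv ⊢
            refine ⟨lt_of_lt_of_le hv.1 (hL'le v hvs), hvF, ?_⟩
            calc (univ.filter (fun u => G.Adj v u ∧ u ∉ (dedState G L' (n+1)).1)).card
                ≤ (univ.filter (fun u => G.Adj v u ∧ u ∉ (dedState G L n).1)).card := by
                  apply card_le_card
                  intro u hu
                  simp only [mem_filter] at hu ⊢
                  exact ⟨hu.1, hu.2.1, fun h => hu.2.2 (ihP h)⟩
              _ ≤ L v := hv.2.2
              _ ≤ L' v := hL'le v hvs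
        constructor
        · intro u hu
          rw [dedState_succ, dedStep_eq] at hu
          rcases mem_union.mp hu with hu | hu
          · exact dedState_P_succ G L' (n+1) (ihP hu)
          · obtain ⟨v, hv, hu⟩ := mem_biUnion.mp hu
            simp only [mem_filter, mem_univ, true_and] at hu
            by_cases hvs : v = s
            · subst hvs
              have hU : u ∈ U := by
                rw [← hUfire n hv]
                exact mem_filter.mpr ⟨mem_univ _, hu⟩
              exact dedState_P_mono G L' (Nat.zero_le _) (hU0 u hU)
            · exact dedState_fired_adj G L' (n+1+1) v (hfire' v hv hvs) u hu.1
        · intro v hv hvs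
          rw [dedState_succ, dedStep_eq] at hv
          rcases mem_union.mp hv with hv | hv
          · exact dedState_F_succ G L' (n+1) (ihF v hv hvs)
          · exact hfire' v hv hvs
  refine ⟨L', ⟨K + 1, ?_⟩, hsum, hL's⟩
  have h1 : (dedState G L K).1 ⊆ (dedState G L' (K+1)).1 := (main K).1
  rw [hK'] at h1
  exact subset_antisymm (subset_univ _) h1
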